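/- arXiv:1904.07699 — 5 statements merged into one kernel-verified Lean document; each statement's English description precedes it below -/
import Mathlib

section
/- Let A = [[a,b],[c,d]] be a 2×2 real matrix with a, b, c, d > 0. Then for every z in the closed disc cl(D), Re w_A(z) > 0 (in particular w_A(z) ≠ 0), and φ_A maps cl(D) into D; in fact φ_A(cl(D)) is the closed disc centred on the real axis whose boundary passes through the points a/(a+c) and b/(b+d), both of which lie in the open interval (0,1). -/
open Set Metric

/-- `D`, the open disc of radius 1/2 centred at 1/2 in ℂ. -/
def Ddisc : Set ℂ := Metric.ball (1/2 : ℂ) (1/2)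

/-- For a 2×2 matrix `A = [[a,b],[c,d]]`, `wFun A z = (a+c−b−d)z + b + d`. -/
noncomputable def wFun (A : Matrix (Fin 2) (Fin 2) ℂ) (z : ℂ) : ℂ :=
  (A 0 0 + A 1 0 - A 0 1 - A 1 1) * z + A 0 1 + A 1 1

/-- For a 2×2 matrix `A = [[a,b],[c,d]]`, `phiFun A z = ((a−b)z + b)/w_A(z)`. -/
noncomputable def phiFun (A : Matrix (Fin 2) (Fin 2) ℂ) (z : ℂ) : ℂ :=
  ((A 0 0 - A 0 1) * z + A 0 1) / wFun A z

/-!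
Write `s = a + c`, `t = b + d`, `p = a / s`, `q = b / t`. Then `w_A(z) = s z + t (1 - z)` and
`φ_A(z) = q + (p - q) · M(z)` with `M(z) = s z / (s z + t (1 - z))`. The Möbius map `M` fixes `0`
and `1` and maps `cl(D)` onto itself, because `cl(D) = {z : |z|² ≤ Re z}` and
`Re M - |M|² = s t (Re z - |z|²) / |w_A(z)|²`; its inverse on `cl(D)` is the same map with `s`
and `t` swapped. Hence `φ_A(cl(D))` is the image of `cl(D)` under the real affine map
`x ↦ q + (p - q) x`, the closed disc with diameter `[p, q] ⊂ (0, 1)`.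
-/

theorem image_add_smul_closedBall {𝕜 E : Type*} [NormedField 𝕜] [NormedAddCommGroup E]
    [NormedSpace 𝕜 E] (y : E) (c : 𝕜) (x : E) {r : ℝ} (hr : 0 ≤ r) :
    (fun z => y + c • z) '' closedBall x r = closedBall (y + c • x) (‖c‖ * r) := by
  rw [← vadd_eq_add, ← vadd_closedBall, ← smul_closedBall c x hr, ← Set.image_smul,
    ← Set.image_vadd, Set.image_image]
  rfl

lemma mem_closedBall_half_iff {z : ℂ} :
    z ∈ closedBall (1/2 : ℂ) (1/2) ↔ Complex.normSq z ≤ z.re := by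
  rw [mem_closedBall, Complex.dist_eq, ← sq_le_sq₀ (norm_nonneg _) (by norm_num),
    Complex.sq_norm, Complex.normSq_apply, Complex.normSq_apply]
  simp only [Complex.sub_re, Complex.sub_im]
  norm_num
  constructor <;> intro h <;> nlinarith

lemma re_mem_Icc_of_mem_closedBall_half {z : ℂ} (hz : z ∈ closedBall (1/2 : ℂ) (1/2)) :
    z.re ∈ Icc (0 : ℝ) 1 := by
  have h := (Complex.abs_re_le_norm (z - 1/2)).trans (mem_closedBall_iff_norm.1 hz)
  rw [Complex.sub_re, abs_le] at h
  norm_num at h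
  constructor <;> linarith

lemma re_pos_of_mem_closedBall_half {s t : ℝ} (hs : 0 < s) (ht : 0 < t) {z : ℂ}
    (hz : z ∈ closedBall (1/2 : ℂ) (1/2)) : 0 < (s * z + t * (1 - z)).re := by
  obtain ⟨h0, h1⟩ := re_mem_Icc_of_mem_closedBall_half hz
  simp only [Complex.add_re, Complex.re_ofReal_mul, Complex.sub_re, Complex.one_re]
  nlinarith [mul_le_mul_of_nonneg_right (min_le_left s t) h0,
    mul_le_mul_of_nonneg_right (min_le_right s t) (sub_nonneg.2 h1), lt_min hs ht]

noncomputable def mobiusFixingZeroOne (s t : ℝ) (z : ℂ) : ℂ := s * z / (s * z + t * (1 - z))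

lemma re_sub_normSq_mobiusFixingZeroOne (s t : ℝ) {z : ℂ} (hw : s * z + t * (1 - z) ≠ 0) :
    (mobiusFixingZeroOne s t z).re - Complex.normSq (mobiusFixingZeroOne s t z)
      = s * t * (z.re - Complex.normSq z) / Complex.normSq (s * z + t * (1 - z)) := by
  have hN : Complex.normSq (s * z + t * (1 - z)) ≠ 0 := by simpa using hw
  unfold mobiusFixingZeroOne
  rw [Complex.div_re, Complex.normSq_div]
  field_simp
  simp only [Complex.normSq_apply, Complex.add_re, Complex.add_im, Complex.mul_re, Complex.mul_im,
    Complex.ofReal_re, Complex.ofReal_im, Complex.sub_re, Complex.sub_im, Complex.one_re,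
    Complex.one_im]
  ring

lemma mobiusFixingZeroOne_swap_comp {s t : ℝ} (hs : s ≠ 0) (ht : t ≠ 0) {z : ℂ}
    (hw : s * z + t * (1 - z) ≠ 0) :
    mobiusFixingZeroOne t s (mobiusFixingZeroOne s t z) = z := by
  unfold mobiusFixingZeroOne
  have hden : t * (s * z / (s * z + t * (1 - z))) + s * (1 - s * z / (s * z + t * (1 - z)))
      = s * t / (s * z + t * (1 - z)) := by
    field_simp
    ring
  have hs' : (s : ℂ) ≠ 0 := by exact_mod_cast hs
  have ht' : (t : ℂ) ≠ 0 := by exact_mod_cast ht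
  rw [hden]
  field_simp

lemma mapsTo_mobiusFixingZeroOne {s t : ℝ} (hs : 0 < s) (ht : 0 < t) :
    MapsTo (mobiusFixingZeroOne s t) (closedBall (1/2) (1/2)) (closedBall (1/2) (1/2)) := by
  intro z hz
  have hw := Complex.ne_zero_of_re_pos (re_pos_of_mem_closedBall_half hs ht hz)
  rw [mem_closedBall_half_iff] at hz ⊢
  rw [← sub_nonneg, re_sub_normSq_mobiusFixingZeroOne s t hw]
  exact div_nonneg (mul_nonneg (by positivity) (sub_nonneg.2 hz)) (Complex.normSq_nonneg _)

lemma image_mobiusFixingZeroOne {s t : ℝ} (hs : 0 < s) (ht : 0 < t) :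
    mobiusFixingZeroOne s t '' closedBall (1/2) (1/2) = closedBall (1/2) (1/2) := by
  refine (mapsTo_mobiusFixingZeroOne hs ht).image_subset.antisymm fun ζ hζ =>
    ⟨mobiusFixingZeroOne t s ζ, mapsTo_mobiusFixingZeroOne ht hs hζ, ?_⟩
  exact mobiusFixingZeroOne_swap_comp ht.ne' hs.ne'
    (Complex.ne_zero_of_re_pos (re_pos_of_mem_closedBall_half ht hs hζ))

lemma wFun_of_real (a b c d : ℝ) (z : ℂ) :
    wFun !![(a : ℂ), (b : ℂ); (c : ℂ), (d : ℂ)] z = (a + c : ℝ) * z + (b + d : ℝ) * (1 - z) := by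
  simp only [wFun, Matrix.of_apply, Matrix.cons_val', Matrix.cons_val_zero, Matrix.cons_val_one,
    Matrix.empty_val', Matrix.cons_val_fin_one, Complex.ofReal_add]
  ring

lemma phiFun_of_real_eq {a b c d : ℝ} (hac : a + c ≠ 0) (hbd : b + d ≠ 0) {z : ℂ}
    (hw : wFun !![(a : ℂ), (b : ℂ); (c : ℂ), (d : ℂ)] z ≠ 0) :
    phiFun !![(a : ℂ), (b : ℂ); (c : ℂ), (d : ℂ)] z
      = (b / (b + d) : ℝ) +
          (a / (a + c) - b / (b + d) : ℝ) * mobiusFixingZeroOne (a + c) (b + d) z := by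
  have hac' : (a : ℂ) + c ≠ 0 := by exact_mod_cast hac
  have hbd' : (b : ℂ) + d ≠ 0 := by exact_mod_cast hbd
  rw [wFun_of_real] at hw
  rw [phiFun, wFun_of_real, mobiusFixingZeroOne]
  simp only [Matrix.of_apply, Matrix.cons_val', Matrix.cons_val_zero, Matrix.cons_val_one,
    Matrix.empty_val', Matrix.cons_val_fin_one]
  generalize hW : ((a + c : ℝ) : ℂ) * z + ((b + d : ℝ) : ℂ) * (1 - z) = W at hw ⊢
  field_simp
  rw [← hW]
  push_cast
  field_simp
  ring

lemma closedBall_subset_Ddisc {p q : ℝ} (hp : p ∈ Ioo (0 : ℝ) 1) (hq : q ∈ Ioo (0 : ℝ) 1) :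
    closedBall (((p + q) / 2 : ℝ) : ℂ) (|p - q| / 2) ⊆ Ddisc := by
  refine closedBall_subset_ball' ?_
  rw [Complex.dist_of_im_eq (by simp), Real.dist_eq]
  norm_num
  obtain ⟨hp0, hp1⟩ := hp
  obtain ⟨hq0, hq1⟩ := hq
  rcases abs_cases (p - q) with ⟨h, -⟩ | ⟨h, -⟩ <;>
    rcases abs_cases ((p + q) / 2 - 1 / 2) with ⟨h', -⟩ | ⟨h', -⟩ <;> linarith

lemma div_add_mem_Ioo {a c : ℝ} (ha : 0 < a) (hc : 0 < c) : a / (a + c) ∈ Ioo (0 : ℝ) 1 :=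
  ⟨by positivity, (div_lt_one (by positivity)).2 (by linarith)⟩

/-- For a positive 2×2 matrix, $\mathrm{Re}\, w_A > 0$ on $\overline{D}$
(so $w_A \neq 0$ there), and $\varphi_A$ maps $\overline{D}$ into $D$; in fact the
image is the closed disc centred on the real axis whose boundary passes through
$a/(a+c)$ and $b/(b+d)$, both in $(0,1)$. -/
theorem positive_matrix_disc_action (a b c d : ℝ)
    (ha : 0 < a) (hb : 0 < b) (hc : 0 < c) (hd : 0 < d) :
    (∀ z ∈ closedBall (1/2 : ℂ) (1/2),
      0 < (wFun !![(a : ℂ), (b : ℂ); (c : ℂ), (d : ℂ)] z).re ∧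
      wFun !![(a : ℂ), (b : ℂ); (c : ℂ), (d : ℂ)] z ≠ 0) ∧
    (phiFun !![(a : ℂ), (b : ℂ); (c : ℂ), (d : ℂ)] '' closedBall (1/2 : ℂ) (1/2) ⊆ Ddisc) ∧
    a / (a + c) ∈ Set.Ioo (0 : ℝ) 1 ∧ b / (b + d) ∈ Set.Ioo (0 : ℝ) 1 ∧
    phiFun !![(a : ℂ), (b : ℂ); (c : ℂ), (d : ℂ)] '' closedBall (1/2 : ℂ) (1/2)
      = closedBall (((a / (a + c) + b / (b + d)) / 2 : ℝ) : ℂ)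
          (|a / (a + c) - b / (b + d)| / 2) := by
  have hac : 0 < a + c := by positivity
  have hbd : 0 < b + d := by positivity
  have hw_re : ∀ z ∈ closedBall (1/2 : ℂ) (1/2),
      0 < (wFun !![(a : ℂ), (b : ℂ); (c : ℂ), (d : ℂ)] z).re := fun z hz => by
    rw [wFun_of_real]
    exact re_pos_of_mem_closedBall_half hac hbd hz
  have hw_ne := fun z hz => Complex.ne_zero_of_re_pos (hw_re z hz)
  have himage : phiFun !![(a : ℂ), (b : ℂ); (c : ℂ), (d : ℂ)] '' closedBall (1/2 : ℂ) (1/2)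
      = closedBall (((a / (a + c) + b / (b + d)) / 2 : ℝ) : ℂ)
          (|a / (a + c) - b / (b + d)| / 2) := by
    calc _ = (fun x : ℂ => ((b / (b + d) : ℝ) : ℂ) + ((a / (a + c) - b / (b + d) : ℝ) : ℂ) • x) ''
          (mobiusFixingZeroOne (a + c) (b + d) '' closedBall (1/2) (1/2)) := by
          rw [image_image]
          exact image_congr fun z hz => phiFun_of_real_eq hac.ne' hbd.ne' (hw_ne z hz)
      _ = _ := by
          rw [image_mobiusFixingZeroOne hac hbd, image_add_smul_closedBall _ _ _ (by norm_num),
            Complex.norm_real, Real.norm_eq_abs, smul_eq_mul]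
          congr 1
          · push_cast; ring
          · ring
  exact ⟨fun z hz => ⟨hw_re z hz, hw_ne z hz⟩,
    himage ▸ closedBall_subset_Ddisc (div_add_mem_Ioo ha hc) (div_add_mem_Ioo hb hd),
    div_add_mem_Ioo ha hc, div_add_mem_Ioo hb hd, himage⟩
end

section
/- Let A = [[a,b],[c,d]] be a complex 2×2 matrix such that φ_A(cl(D)) ⊆ D and Re w_A(z) > 0 for all z ∈ cl(D). For t ∈ ℂ let A_t := [[t,b],[c,d]] be the matrix obtained by replacing the entry a by t (the perturbations of the other three entries are analogous). Then there exist a constant C₀ < ∞, a constant r ∈ (0,1), and bounded analytic functions f_k : D → ℂ with sup_{z∈D} |f_k(z)| ≤ C₀^k r/2 for every k ≥ 0, such that for every t ∈ ℂ with |t − a| < C₀⁻¹ and every z ∈ D, φ_{A_t}(z) − 1/2 = Σ_{k=0}^∞ (t − a)^k f_k(z), the series converging absolutely. -/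
open Set Metric

/-!
The entry `a` cancels from the numerator of `φ_A(z) - 1 = -((c - d) z + d) / w_A(z)`, while
`w_{A_t}(z) = w_A(z) + (t - a) z`. Hence `φ_{A_t}(z) - 1 = (φ_A(z) - 1) / (1 + (t - a) z / w_A(z))`,
a geometric series in `t - a`. On the compact disc `cl(D)` the function `w_A` has no zeros, so
`z / w_A(z)` is bounded by some `M`, and `|φ_A - 1/2| ≤ 1/2 - ε` for some `ε > 0`; this gives
`C₀ = 2M` and `r = 1 - ε`.
-/

theorem summable_norm_pow_mul_of_norm_le_pow_mul {𝕜 : Type*} [NormedDivisionRing 𝕜]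
    {f : ℕ → 𝕜} {s : 𝕜} {C M : ℝ} (hC : 0 < C) (hf : ∀ k, ‖f k‖ ≤ C ^ k * M)
    (hs : ‖s‖ < C⁻¹) : Summable fun k => ‖s ^ k * f k‖ := by
  have hsC : ‖s‖ * C < 1 := by
    simpa [inv_mul_cancel₀ hC.ne'] using mul_lt_mul_of_pos_right hs hC
  refine Summable.of_nonneg_of_le (fun _ => norm_nonneg _) (fun k => ?_)
    ((summable_geometric_of_lt_one (by positivity) hsC).mul_right M)
  rw [norm_mul, norm_pow, mul_pow, mul_assoc]
  exact mul_le_mul_of_nonneg_left (hf k) (by positivity)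

@[fun_prop]
theorem differentiable_wFun (A : Matrix (Fin 2) (Fin 2) ℂ) : Differentiable ℂ (wFun A) := by
  unfold wFun; fun_prop

theorem differentiableOn_phiFun (A : Matrix (Fin 2) (Fin 2) ℂ) {U : Set ℂ}
    (hw : ∀ z ∈ U, wFun A z ≠ 0) : DifferentiableOn ℂ (phiFun A) U := by
  unfold phiFun; fun_prop (disch := assumption)

theorem wFun_update_a (a b c d t z : ℂ) :
    wFun !![t, b; c, d] z = wFun !![a, b; c, d] z + (t - a) * z := by
  show (t + c - b - d) * z + b + d = (a + c - b - d) * z + b + d + (t - a) * z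
  ring

theorem phiFun_sub_one (A : Matrix (Fin 2) (Fin 2) ℂ) {z : ℂ} (hw : wFun A z ≠ 0) :
    phiFun A z - 1 = -((A 1 0 - A 1 1) * z + A 1 1) / wFun A z := by
  rw [phiFun, div_sub_one hw, wFun]; ring

theorem phiFun_update_a_sub_one {a b c d t z : ℂ} (hw : wFun !![a, b; c, d] z ≠ 0)
    (hx : 1 - (t - a) * (-z / wFun !![a, b; c, d] z) ≠ 0) :
    phiFun !![t, b; c, d] z - 1 =
      (phiFun !![a, b; c, d] z - 1) * (1 - (t - a) * (-z / wFun !![a, b; c, d] z))⁻¹ := by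
  have hwt : wFun !![t, b; c, d] z =
      wFun !![a, b; c, d] z * (1 - (t - a) * (-z / wFun !![a, b; c, d] z)) := by
    rw [wFun_update_a a]; field_simp; ring
  rw [phiFun_sub_one _ hw, phiFun_sub_one _ (hwt ▸ mul_ne_zero hw hx), hwt]
  rw [div_mul_eq_div_div, div_eq_mul_inv (_ / _)]
  rfl

/-- The coefficient `f_k`: the `k`-th term of the geometric expansion of `φ_{A_t} - 1` in `t - a`,
plus the constant `1/2` in `f_0`. -/
noncomputable def perturbationCoeff (A : Matrix (Fin 2) (Fin 2) ℂ) (k : ℕ) (z : ℂ) : ℂ :=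
  (phiFun A z - 1) * (-z / wFun A z) ^ k + if k = 0 then 1 / 2 else 0

theorem differentiableOn_perturbationCoeff (A : Matrix (Fin 2) (Fin 2) ℂ) (k : ℕ) {U : Set ℂ}
    (hw : ∀ z ∈ U, wFun A z ≠ 0) : DifferentiableOn ℂ (perturbationCoeff A k) U := by
  have := differentiableOn_phiFun A hw
  unfold perturbationCoeff; fun_prop (disch := assumption)

theorem norm_perturbationCoeff_le (A : Matrix (Fin 2) (Fin 2) ℂ) (k : ℕ) {z : ℂ} {ε M : ℝ}
    (hε : 0 ≤ ε) (hφ : ‖phiFun A z - 1 / 2‖ ≤ 1 / 2 - ε) (hu : ‖-z / wFun A z‖ ≤ M) :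
    ‖perturbationCoeff A k z‖ ≤ (2 * M) ^ k * (1 - ε) / 2 := by
  rcases k with _ | k
  · simp only [perturbationCoeff, pow_zero, mul_one, if_pos]
    rw [show phiFun A z - 1 + 1 / 2 = phiFun A z - 1 / 2 by ring]
    linarith
  · have hφ1 : ‖phiFun A z - 1‖ ≤ 1 - ε := by
      calc ‖phiFun A z - 1‖ = ‖(phiFun A z - 1 / 2) - 1 / 2‖ := by ring_nf
        _ ≤ ‖phiFun A z - 1 / 2‖ + ‖(1 / 2 : ℂ)‖ := norm_sub_le _ _
        _ ≤ 1 - ε := by norm_num; linarith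
    have hM : 0 ≤ M := (norm_nonneg _).trans hu
    have h2 : (1 : ℝ) ≤ 2 ^ k := one_le_pow₀ one_le_two
    simp only [perturbationCoeff, Nat.succ_ne_zero, if_false, add_zero, norm_mul, norm_pow]
    calc ‖phiFun A z - 1‖ * ‖-z / wFun A z‖ ^ (k + 1) ≤ (1 - ε) * M ^ (k + 1) :=
          mul_le_mul hφ1 (pow_le_pow_left₀ (norm_nonneg _) hu _) (by positivity)
            ((norm_nonneg _).trans hφ1)
      _ ≤ (1 - ε) * M ^ (k + 1) * 2 ^ k :=
          le_mul_of_one_le_right (mul_nonneg ((norm_nonneg _).trans hφ1) (pow_nonneg hM _)) h2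
      _ = (2 * M) ^ (k + 1) * (1 - ε) / 2 := by ring

theorem hasSum_perturbationCoeff {a b c d t z : ℂ} (hw : wFun !![a, b; c, d] z ≠ 0)
    (hx : ‖(t - a) * (-z / wFun !![a, b; c, d] z)‖ < 1) :
    HasSum (fun k => (t - a) ^ k * perturbationCoeff !![a, b; c, d] k z)
      (phiFun !![t, b; c, d] z - 1 / 2) := by
  set x := (t - a) * (-z / wFun !![a, b; c, d] z) with hx_def
  have hx1 : 1 - x ≠ 0 := sub_ne_zero.2 fun h => by simp [← h] at hx
  have hsummand : (fun k => (t - a) ^ k * perturbationCoeff !![a, b; c, d] k z) =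
      fun k => (phiFun !![a, b; c, d] z - 1) * x ^ k + if k = 0 then 1 / 2 else 0 := by
    funext k
    rcases k with _ | k
    · simp [perturbationCoeff]
    · simp only [perturbationCoeff, Nat.succ_ne_zero, if_false, add_zero, hx_def, mul_pow]
      ring
  rw [hsummand, show phiFun !![t, b; c, d] z - 1 / 2 =
      (phiFun !![a, b; c, d] z - 1) * (1 - x)⁻¹ + 1 / 2 by
    rw [← phiFun_update_a_sub_one hw hx1]; ring]
  exact ((hasSum_geometric_of_norm_lt_one hx).mul_left _).add (hasSum_ite_eq 0 _)

theorem exists_pos_forall_norm_phiFun_sub_half_le {A : Matrix (Fin 2) (Fin 2) ℂ} {K : Set ℂ}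
    (hK : IsCompact K) (hKne : K.Nonempty) (hw : ∀ z ∈ K, wFun A z ≠ 0)
    (hphi : phiFun A '' K ⊆ Ddisc) :
    ∃ ε ∈ Ioc (0 : ℝ) (1 / 2), ∀ z ∈ K, ‖phiFun A z - 1 / 2‖ ≤ 1 / 2 - ε := by
  obtain ⟨ε, hε, hεφ⟩ := hK.exists_forall_le' (f := fun z => 1 / 2 - ‖phiFun A z - 1 / 2‖)
    (continuousOn_const.sub ((differentiableOn_phiFun A hw).continuousOn.sub continuousOn_const).norm)
    fun z hz => sub_pos.2 (by simpa [Ddisc, dist_eq_norm] using hphi (mem_image_of_mem _ hz))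
  obtain ⟨z₀, hz₀⟩ := hKne
  exact ⟨ε, ⟨hε, by linarith [norm_nonneg (phiFun A z₀ - 1 / 2), hεφ z₀ hz₀]⟩,
    fun z hz => by linarith [hεφ z hz]⟩

theorem exists_pos_forall_norm_div_wFun_le {A : Matrix (Fin 2) (Fin 2) ℂ} {K : Set ℂ}
    (hK : IsCompact K) (hw : ∀ z ∈ K, wFun A z ≠ 0) :
    ∃ M > 0, ∀ z ∈ K, ‖-z / wFun A z‖ ≤ M := by
  obtain ⟨M, hM⟩ := hK.exists_bound_of_continuousOn (f := fun z => -z / wFun A z)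
    (continuousOn_id.neg.div (differentiable_wFun A).continuous.continuousOn hw)
  exact ⟨max M 1, by positivity, fun z hz => (hM z hz).trans (le_max_left _ _)⟩

/-- Perturbing the entry $a$ of $A=[[a,b],[c,d]]$, the function
$\varphi_{A_t} - 1/2$ on $D$ is given by a power series in $t-a$ with bounded analytic
coefficients $f_k$ satisfying $\|f_k\|_\infty \le C_0^k r/2$. -/
theorem phiFun_perturbation_series (a b c d : ℂ)
    (hphi : phiFun !![a, b; c, d] '' closedBall (1/2 : ℂ) (1/2) ⊆ Ddisc)
    (hw : ∀ z ∈ closedBall (1/2 : ℂ) (1/2), 0 < (wFun !![a, b; c, d] z).re) :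
    ∃ C₀ : ℝ, 0 < C₀ ∧ ∃ r ∈ Set.Ioo (0 : ℝ) 1, ∃ f : ℕ → ℂ → ℂ,
      (∀ k : ℕ, DifferentiableOn ℂ (f k) Ddisc ∧
        ∀ z ∈ Ddisc, ‖f k z‖ ≤ C₀ ^ k * r / 2) ∧
      ∀ t : ℂ, ‖t - a‖ < C₀⁻¹ → ∀ z ∈ Ddisc,
        HasSum (fun k : ℕ => (t - a) ^ k * f k z) (phiFun !![t, b; c, d] z - 1/2) ∧
        Summable (fun k : ℕ => ‖(t - a) ^ k * f k z‖) := by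
  set A := !![a, b; c, d]
  have hK : IsCompact (closedBall (1/2 : ℂ) (1/2)) := isCompact_closedBall _ _
  have hw0 : ∀ z ∈ closedBall (1/2 : ℂ) (1/2), wFun A z ≠ 0 :=
    fun z hz h => (hw z hz).ne' (by simp [h])
  obtain ⟨ε, ⟨hε, hε1⟩, hεφ⟩ := exists_pos_forall_norm_phiFun_sub_half_le hK
    ⟨1 / 2, mem_closedBall_self (by norm_num)⟩ hw0 hphi
  obtain ⟨M, hM, hu⟩ := exists_pos_forall_norm_div_wFun_le hK hw0
  have hD : Ddisc ⊆ closedBall (1/2 : ℂ) (1/2) := ball_subset_closedBall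
  have hbound : ∀ z ∈ Ddisc, ∀ k, ‖perturbationCoeff A k z‖ ≤ (2 * M) ^ k * (1 - ε) / 2 :=
    fun z hz k => norm_perturbationCoeff_le A k hε.le (hεφ z (hD hz)) (hu z (hD hz))
  refine ⟨2 * M, by positivity, 1 - ε, ⟨by linarith, by linarith⟩, perturbationCoeff A,
    fun k => ⟨differentiableOn_perturbationCoeff A k fun z hz => hw0 z (hD hz),
      fun z hz => hbound z hz k⟩, fun t ht z hz => ⟨?_, ?_⟩⟩
  · refine hasSum_perturbationCoeff (hw0 z (hD hz)) ?_
    calc ‖(t - a) * (-z / wFun A z)‖ ≤ ‖t - a‖ * M := by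
          rw [norm_mul]; exact mul_le_mul_of_nonneg_left (hu z (hD hz)) (norm_nonneg _)
      _ < (2 * M)⁻¹ * M := mul_lt_mul_of_pos_right ht hM
      _ < 1 := by rw [mul_inv, mul_assoc, inv_mul_cancel₀ hM.ne']; norm_num
  · exact summable_norm_pow_mul_of_norm_le_pow_mul (by positivity)
      (fun k => (hbound z hz k).trans_eq (mul_div_assoc _ _ _)) ht
end

section
/- Let 0 < r < 1 and 0 < C₀ < ∞, and for each k ≥ 0 let f_k : D → ℂ be a bounded analytic function with sup_{z∈D} |f_k(z)| ≤ C₀^k r/2. Then for every n ≥ 1 and every m ≥ 0 there exists a bounded analytic function φ_{m,n} : D → ℂ, not depending on x, such that for every x ∈ ℂ with |x| < C₀⁻¹ and every z ∈ D, ( Σ_{k=0}^∞ x^k f_k(z) )^n = Σ_{m=0}^∞ x^m φ_{m,n}(z), and sup_{z∈D} |φ_{m,n}(z)| ≤ (C₀^m r^n / 2^n) · (m+n−1)! / (m!(n−1)!). -/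
open Set Metric

/-!
Take `φ_{m,n}(z)` to be the `m`-th coefficient of the `n`-th power of the formal power series
`∑ₖ f_k(z) Xᵏ`. Each coefficient is a finite sum of products of the `f_k`, so it is analytic.
Writing `(∑ₖ aₖ Xᵏ)^(n+1) = (∑ₖ aₖ Xᵏ) · (∑ₖ aₖ Xᵏ)^n`, induction on `n` bounds the coefficients
by the hockey-stick identity, and evaluates the power series at `x` by the Cauchy product of
absolutely convergent series.
-/

open PowerSeries Finset

section NormedRing

variable {R : Type*} [NormedRing R]

theorem norm_coeff_mk_pow_succ_le {a : ℕ → R} {C b : ℝ} (ha : ∀ k, ‖a k‖ ≤ C ^ k * b)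
    (n m : ℕ) : ‖coeff m (mk a ^ (n + 1))‖ ≤ C ^ m * b ^ (n + 1) * (n + m).choose n := by
  induction n generalizing m with
  | zero => simpa using ha m
  | succ n ih =>
    calc ‖coeff m (mk a ^ (n + 2))‖
        ≤ ∑ ij ∈ antidiagonal m, ‖a ij.1‖ * ‖coeff ij.2 (mk a ^ (n + 1))‖ := by
          rw [pow_succ', coeff_mul]
          refine (norm_sum_le _ _).trans (sum_le_sum fun ij _ => ?_)
          simpa only [coeff_mk] using norm_mul_le _ _
      _ ≤ ∑ ij ∈ antidiagonal m,
            C ^ ij.1 * b * (C ^ ij.2 * b ^ (n + 1) * (n + ij.2).choose n) :=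
          sum_le_sum fun ij _ => mul_le_mul (ha _) (ih _) (norm_nonneg _)
            ((norm_nonneg _).trans (ha _))
      _ = C ^ m * b ^ (n + 2) * ∑ ij ∈ antidiagonal m, ((n + ij.2).choose n : ℝ) := by
          rw [mul_sum]
          refine sum_congr rfl fun ij hij => ?_
          rw [← mem_antidiagonal.mp hij, pow_add]
          ring
      _ = C ^ m * b ^ (n + 2) * (n + 1 + m).choose (n + 1) := by
          rw [← Nat.cast_sum, sum_antidiagonal_choose_add, add_right_comm]

theorem summable_norm_pow_mul_of_norm_le [NormOneClass R] {a : ℕ → R} {x : R} {C b : ℝ}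
    (hC : 0 ≤ C) (hxC : ‖x‖ * C < 1) (ha : ∀ k, ‖a k‖ ≤ C ^ k * b) :
    Summable fun k => ‖x ^ k * a k‖ := by
  refine .of_nonneg_of_le (fun _ => norm_nonneg _) (fun k => ?_)
    ((summable_geometric_of_lt_one (by positivity) hxC).mul_right b)
  calc ‖x ^ k * a k‖ ≤ ‖x‖ ^ k * (C ^ k * b) :=
        (norm_mul_le _ _).trans (mul_le_mul (norm_pow_le _ _) (ha k) (norm_nonneg _)
          (by positivity))
    _ = (‖x‖ * C) ^ k * b := by rw [mul_pow, mul_assoc]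

theorem hasSum_coeff_mk_pow [CompleteSpace R] {a : ℕ → R} (ha : Summable fun k => ‖a k‖)
    (n : ℕ) : (Summable fun m => ‖coeff m (mk a ^ n)‖) ∧
      HasSum (fun m => coeff m (mk a ^ n)) ((∑' k, a k) ^ n) := by
  induction n with
  | zero =>
    simp only [pow_zero, coeff_one]
    exact ⟨summable_of_ne_finset_zero (s := {0}) (by simp_all), hasSum_ite_eq 0 1⟩
  | succ n ih =>
    set g := fun j => coeff j (mk a ^ n)
    have hmul (m : ℕ) : coeff m (mk a ^ (n + 1)) = ∑ ij ∈ antidiagonal m, a ij.1 * g ij.2 := by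
      simp only [g, pow_succ', coeff_mul, coeff_mk]
    have hsum := summable_norm_sum_mul_antidiagonal_of_summable_norm ha ih.1
    simp only [hmul]
    refine ⟨hsum, ?_⟩
    rw [pow_succ', ← ih.2.tsum_eq, tsum_mul_tsum_eq_tsum_sum_antidiagonal_of_summable_norm ha ih.1]
    exact hsum.of_norm.hasSum

end NormedRing

theorem coeff_mk_pow_mul_pow {R : Type*} [CommSemiring R] (x : R) (a : ℕ → R) (n m : ℕ) :
    coeff m (mk (fun k => x ^ k * a k) ^ n) = x ^ m * coeff m (mk a ^ n) := by
  rw [← rescale_mk, ← map_pow, coeff_rescale]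

theorem differentiableOn_coeff_mk_pow {𝕜 E 𝔸 : Type*} [NontriviallyNormedField 𝕜]
    [NormedAddCommGroup E] [NormedSpace 𝕜 E] [NormedRing 𝔸] [NormedAlgebra 𝕜 𝔸]
    {f : ℕ → E → 𝔸} {s : Set E} (hf : ∀ k, DifferentiableOn 𝕜 (f k) s) (n m : ℕ) :
    DifferentiableOn 𝕜 (fun z => coeff m (mk (fun k => f k z) ^ n)) s := by
  induction n generalizing m with
  | zero => simpa only [pow_zero, coeff_one] using differentiableOn_const _
  | succ n ih =>
    simp only [pow_succ', coeff_mul, coeff_mk]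
    exact .fun_sum fun ij _ => (hf ij.1).mul (ih ij.2)

theorem power_of_series_general (r C₀ : ℝ) (hC₀ : 0 < C₀)
    (f : ℕ → ℂ → ℂ)
    (hf : ∀ k : ℕ, DifferentiableOn ℂ (f k) Ddisc ∧
      ∀ z ∈ Ddisc, ‖f k z‖ ≤ C₀ ^ k * r / 2) :
    ∃ Φ : ℕ → ℕ → ℂ → ℂ, ∀ n : ℕ, 1 ≤ n →
      (∀ m : ℕ, DifferentiableOn ℂ (Φ m n) Ddisc ∧
        ∀ z ∈ Ddisc, ‖Φ m n z‖ ≤ C₀ ^ m * r ^ n / 2 ^ n *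
          (((m + n - 1).factorial : ℝ) / ((m.factorial : ℝ) * ((n - 1).factorial : ℝ)))) ∧
      ∀ x : ℂ, ‖x‖ < C₀⁻¹ → ∀ z ∈ Ddisc,
        HasSum (fun m : ℕ => x ^ m * Φ m n z) ((∑' k : ℕ, x ^ k * f k z) ^ n) := by
  have hfz {z} (hz : z ∈ Ddisc) (k : ℕ) : ‖f k z‖ ≤ C₀ ^ k * (r / 2) :=
    mul_div_assoc (C₀ ^ k) r 2 ▸ (hf k).2 z hz
  refine ⟨fun m n z => coeff m (mk (fun k => f k z) ^ n), fun n hn => ⟨fun m => ⟨?_, ?_⟩, ?_⟩⟩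
  · exact differentiableOn_coeff_mk_pow (fun k => (hf k).1) n m
  · intro z hz
    obtain ⟨n, rfl⟩ := Nat.exists_eq_add_of_le' hn
    refine (norm_coeff_mk_pow_succ_le (hfz hz) n m).trans_eq ?_
    rw [Nat.add_succ_sub_one, Nat.add_sub_cancel, Nat.cast_add_choose, add_comm n m, div_pow]
    ring
  · intro x hx z hz
    have hxC : ‖x‖ * C₀ < 1 := (mul_lt_mul_of_pos_right hx hC₀).trans_eq (inv_mul_cancel₀ hC₀.ne')
    simpa only [coeff_mk_pow_mul_pow] using (hasSum_coeff_mk_pow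
      (summable_norm_pow_mul_of_norm_le hC₀.le hxC (hfz hz)) n).2

/-- If $\|f_k\|_\infty \le C_0^k r/2$ then the $n$-th power of the series
$\sum_k x^k f_k$ is itself a power series $\sum_m x^m \varphi_{m,n}$ in $x$ with bounded
analytic coefficients satisfying
$\|\varphi_{m,n}\|_\infty \le (C_0^m r^n/2^n)\binom{m+n-1}{m}$. -/
theorem power_of_series (r C₀ : ℝ) (hr : 0 < r) (hr1 : r < 1) (hC₀ : 0 < C₀)
    (f : ℕ → ℂ → ℂ)
    (hf : ∀ k : ℕ, DifferentiableOn ℂ (f k) Ddisc ∧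
      ∀ z ∈ Ddisc, ‖f k z‖ ≤ C₀ ^ k * r / 2) :
    ∃ Φ : ℕ → ℕ → ℂ → ℂ, ∀ n : ℕ, 1 ≤ n →
      (∀ m : ℕ, DifferentiableOn ℂ (Φ m n) Ddisc ∧
        ∀ z ∈ Ddisc, ‖Φ m n z‖ ≤ C₀ ^ m * r ^ n / 2 ^ n *
          (((m + n - 1).factorial : ℝ) / ((m.factorial : ℝ) * ((n - 1).factorial : ℝ)))) ∧
      ∀ x : ℂ, ‖x‖ < C₀⁻¹ → ∀ z ∈ Ddisc,
        HasSum (fun m : ℕ => x ^ m * Φ m n z) ((∑' k : ℕ, x ^ k * f k z) ^ n) :=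
  power_of_series_general r C₀ hC₀ f hf
end

section
/- Let N ≥ 1 and t₀ ∈ (0,1)^{4N} ∩ Ω (so each A_{t₀}^{(k)} is a positive invertible matrix and the family is irreducible), and let s₀ ∈ (0,1) ∪ (1,2). Then there exists R ∈ (0,1) such that for every ε > 0 there exists δ > 0 with the following property: for every s ∈ ℂ with |s − s₀| < δ, every t ∈ ℂ^{4N} with |t − t₀| < δ, every i ∈ {1,…,N}, and every n ≥ 0, ‖ψ_{A_t^{(i)},s} − ψ_{A_{t₀}^{(i)},s₀}‖_∞ · ‖φ_{A_t^{(i)}} − 1/2‖_∞^n + ‖ψ_{A_{t₀}^{(i)},s₀}‖_∞ · ‖(φ_{A_t^{(i)}} − 1/2)^n − (φ_{A_{t₀}^{(i)}} − 1/2)^n‖_∞ ≤ ε (R/2)^n, where ‖·‖_∞ denotes the supremum norm over D. -/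
open Set Metric

def Amat {α : Type*} (N : ℕ) (t : Fin (4*N) → α) (k : Fin N) : Matrix (Fin 2) (Fin 2) α :=
  Matrix.of ![![t ⟨4*k.1, by have := k.isLt; omega⟩, t ⟨4*k.1+1, by have := k.isLt; omega⟩],
    ![t ⟨4*k.1+2, by have := k.isLt; omega⟩, t ⟨4*k.1+3, by have := k.isLt; omega⟩]]

/-- $\psi_{A,s}(z) := w_A(z)^s$ if $|s| \le 1$, and
$\psi_{A,s}(z) := w_A(z)^{2-s}(\pm\det A)^{s-1}$ if $1 < |s|$, according to the sign of
$\mathrm{Re}(\det A)$; powers via the principal branch of log on the right half-plane. -/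
noncomputable def psiC (s : ℂ) (A : Matrix (Fin 2) (Fin 2) ℂ) (z : ℂ) : ℂ :=
  if ‖s‖ ≤ 1 then Complex.exp (s * Complex.log (wFun A z))
  else if 0 < A.det.re then
    Complex.exp ((2 - s) * Complex.log (wFun A z)) * Complex.exp ((s - 1) * Complex.log A.det)
  else
    Complex.exp ((2 - s) * Complex.log (wFun A z)) * Complex.exp ((s - 1) * Complex.log (-A.det))

/-- The set $\Omega$ of parameters $t \in \mathbb{C}^{4N}$: (i) $\mathrm{Re}\det A_t^{(k)} \neq 0$;
(ii) $\overline{\varphi_{A_t^{(k)}}(D)} \subset D$; (iii) $\overline{w_{A_t^{(k)}}(D)}$ lies in the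
open right half-plane; (iv) $\varphi_{A_t^{(i)}} \neq \varphi_{A_t^{(j)}}$ for some $i \neq j$. -/
def OmegaSet (N : ℕ) : Set (Fin (4*N) → ℂ) :=
  {t | (∀ k : Fin N, (Amat N t k).det.re ≠ 0) ∧
       (∀ k : Fin N, closure (phiFun (Amat N t k) '' Ddisc) ⊆ Ddisc) ∧
       (∀ k : Fin N, closure (wFun (Amat N t k) '' Ddisc) ⊆ {z : ℂ | 0 < z.re}) ∧
       (∃ i j : Fin N, i ≠ j ∧ ¬ Set.EqOn (phiFun (Amat N t i)) (phiFun (Amat N t j)) Ddisc)}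

/-- The supremum norm over $D$. -/
noncomputable def supD (f : ℂ → ℂ) : ℝ := sSup ((fun z => ‖f z‖) '' Ddisc)

/-!
Conditions (ii) and (iii) of `Ω` at `t₀` are strict on the compact disc `cl(D)`: `φ_{t₀}` maps `D`
into a disc about `1/2` of radius `r < 1/2`, and `w_{t₀}` keeps `cl(D)` in the right half-plane.
Since `|s₀| ≠ 1` and `Re det ≠ 0`, `ψ` stays in one branch of its definition near `(s₀, t₀)`,
so `ψ` and `φ` are jointly continuous in `(s, t, z)` there and converge uniformly on `D` as
`(s, t) → (s₀, t₀)`. Pick `2r < R < 1` and `r < ρ < R/2`. The first term is then small times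
`(R/2)^n`; the second is at most `‖ψ₀‖ · n ρ^(n-1) · ‖φ_t - φ_{t₀}‖`, and `n ρ^(n-1) = O((R/2)^n)`.
-/

open Filter Topology

lemma half_mem_Ddisc : (1/2 : ℂ) ∈ Ddisc := mem_ball_self (by norm_num)

lemma supD_nonneg (f : ℂ → ℂ) : 0 ≤ supD f :=
  Real.sSup_nonneg (by rintro _ ⟨z, -, rfl⟩; positivity)

lemma supD_le {f : ℂ → ℂ} {M : ℝ} (hM : 0 ≤ M) (h : ∀ z ∈ Ddisc, ‖f z‖ ≤ M) : supD f ≤ M :=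
  Real.sSup_le (by rintro _ ⟨z, hz, rfl⟩; exact h z hz) hM

lemma norm_pow_sub_pow_le {R : Type*} [NormedCommRing R] [NormOneClass R] {a b : R} {ρ : ℝ}
    (ha : ‖a‖ ≤ ρ) (hb : ‖b‖ ≤ ρ) (n : ℕ) : ‖a ^ n - b ^ n‖ ≤ n * ρ ^ (n - 1) * ‖a - b‖ := by
  have hρ : 0 ≤ ρ := (norm_nonneg a).trans ha
  have hterm : ∀ i ∈ Finset.range n, ‖a ^ i * b ^ (n - 1 - i)‖ ≤ ρ ^ (n - 1) := fun i hi => by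
    calc ‖a ^ i * b ^ (n - 1 - i)‖ ≤ ‖a‖ ^ i * ‖b‖ ^ (n - 1 - i) :=
          (norm_mul_le _ _).trans (by gcongr <;> exact norm_pow_le _ _)
      _ ≤ ρ ^ i * ρ ^ (n - 1 - i) := by gcongr
      _ = ρ ^ (n - 1) := by
          rw [← pow_add, Nat.add_sub_cancel' (Nat.le_sub_one_of_lt (Finset.mem_range.1 hi))]
  rw [← geom_sum₂_mul]
  refine (norm_mul_le _ _).trans (mul_le_mul_of_nonneg_right ?_ (norm_nonneg _))
  refine (norm_sum_le _ _).trans ((Finset.sum_le_card_nsmul _ _ _ hterm).trans_eq ?_)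
  simp

lemma exists_natCast_mul_pow_pred_le {ρ a : ℝ} (hρ : 0 < ρ) (hρa : ρ < a) :
    ∃ K, ∀ n : ℕ, n * ρ ^ (n - 1) ≤ K * a ^ n := by
  have ha : 0 < a := hρ.trans hρa
  obtain ⟨M, hM⟩ := (tendsto_self_mul_const_pow_of_lt_one (div_pos hρ ha).le
    ((div_lt_one ha).2 hρa)).bddAbove_range
  refine ⟨M / ρ, fun n => ?_⟩
  have hρn : (n : ℝ) * ρ ^ (n - 1) = n * (ρ / a) ^ n * a ^ n / ρ := by
    rcases n with _ | n
    · simp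
    · rw [Nat.add_sub_cancel, div_pow, pow_succ]
      field_simp
  rw [hρn, div_mul_eq_mul_div, div_le_div_iff_of_pos_right hρ]
  exact mul_le_mul_of_nonneg_right (hM ⟨n, rfl⟩) (pow_nonneg ha.le n)

lemma supD_pow_sub_pow_le {f g : ℂ → ℂ} {ρ η : ℝ} (hf : ∀ z ∈ Ddisc, ‖f z‖ ≤ ρ)
    (hg : ∀ z ∈ Ddisc, ‖g z‖ ≤ ρ) (hfg : ∀ z ∈ Ddisc, ‖f z - g z‖ ≤ η) (n : ℕ) :
    supD (fun z => f z ^ n - g z ^ n) ≤ n * ρ ^ (n - 1) * η := by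
  have hρ : 0 ≤ ρ := (norm_nonneg _).trans (hf _ half_mem_Ddisc)
  have hη : 0 ≤ η := (norm_nonneg _).trans (hfg _ half_mem_Ddisc)
  refine supD_le (by positivity) fun z hz => ?_
  exact (norm_pow_sub_pow_le (hf z hz) (hg z hz) n).trans (by gcongr; exact hfg z hz)

lemma eventually_supD_weighted_le {ι : Type*} {l : Filter ι} {Ψ Φ : ι → ℂ → ℂ} {ψ φ : ℂ → ℂ}
    {r R ε : ℝ} (hΨ : TendstoUniformlyOn Ψ ψ l Ddisc) (hΦ : TendstoUniformlyOn Φ φ l Ddisc)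
    (hφ : ∀ z ∈ Ddisc, ‖φ z - 1/2‖ ≤ r) (hrR : r < R / 2) (hε : 0 < ε) :
    ∀ᶠ x in l, ∀ n : ℕ,
      supD (fun z => Ψ x z - ψ z) * supD (fun z => Φ x z - 1/2) ^ n
        + supD ψ * supD (fun z => (Φ x z - 1/2) ^ n - (φ z - 1/2) ^ n) ≤ ε * (R / 2) ^ n := by
  have hr : 0 ≤ r := (norm_nonneg _).trans (hφ _ half_mem_Ddisc)
  obtain ⟨ρ, hrρ, hρR⟩ := exists_between hrR
  obtain ⟨K, hK⟩ := exists_natCast_mul_pow_pred_le (hr.trans_lt hrρ) hρR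
  obtain ⟨η, ⟨hηρ, hηε⟩, hη⟩ : ∃ η, (η < ρ - r ∧ supD ψ * K * η < ε / 2) ∧ 0 < η := by
    have h₀ : ∀ᶠ η in 𝓝 (0 : ℝ), η < ρ - r ∧ supD ψ * K * η < ε / 2 :=
      (eventually_lt_nhds (sub_pos.2 hrρ)).and
        ((continuous_const_mul _).continuousAt.eventually_lt continuousAt_const (by simpa))
    exact ((h₀.filter_mono nhdsWithin_le_nhds).and self_mem_nhdsWithin).exists (f := 𝓝[>] 0)
  filter_upwards [Metric.tendstoUniformlyOn_iff.1 hΨ _ (half_pos hε),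
    Metric.tendstoUniformlyOn_iff.1 hΦ η hη] with x hΨx hΦx n
  have hΦφ : ∀ z ∈ Ddisc, ‖Φ x z - 1/2 - (φ z - 1/2)‖ ≤ η := fun z hz => by
    simpa [dist_eq_norm'] using (hΦx z hz).le
  have hΦ : ∀ z ∈ Ddisc, ‖Φ x z - 1/2‖ ≤ ρ := fun z hz => by
    calc ‖Φ x z - 1/2‖ ≤ ‖Φ x z - 1/2 - (φ z - 1/2)‖ + ‖φ z - 1/2‖ := norm_le_norm_sub_add _ _
      _ ≤ ρ := by linarith [hΦφ z hz, hφ z hz]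
  have hR : 0 < R / 2 := hr.trans_lt hrR
  have h₁ : supD (fun z => Ψ x z - ψ z) * supD (fun z => Φ x z - 1/2) ^ n
      ≤ ε / 2 * (R / 2) ^ n := by
    have hΨs : supD (fun z => Ψ x z - ψ z) ≤ ε / 2 :=
      supD_le (half_pos hε).le fun z hz => by simpa [dist_eq_norm'] using (hΨx z hz).le
    have hΦs : supD (fun z => Φ x z - 1/2) ≤ R / 2 :=
      supD_le hR.le fun z hz => (hΦ z hz).trans hρR.le
    exact mul_le_mul hΨs (pow_le_pow_left₀ (supD_nonneg _) hΦs n)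
      (pow_nonneg (supD_nonneg _) n) (half_pos hε).le
  have h₂ : supD ψ * supD (fun z => (Φ x z - 1/2) ^ n - (φ z - 1/2) ^ n)
      ≤ ε / 2 * (R / 2) ^ n := by
    calc _ ≤ supD ψ * (n * ρ ^ (n - 1) * η) := mul_le_mul_of_nonneg_left
          (supD_pow_sub_pow_le hΦ (fun z hz => (hφ z hz).trans hrρ.le) hΦφ n) (supD_nonneg ψ)
      _ ≤ supD ψ * (K * (R / 2) ^ n * η) :=
          mul_le_mul_of_nonneg_left (mul_le_mul_of_nonneg_right (hK n) hη.le) (supD_nonneg ψ)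
      _ = supD ψ * K * η * (R / 2) ^ n := by ring
      _ ≤ ε / 2 * (R / 2) ^ n := mul_le_mul_of_nonneg_right hηε.le (pow_nonneg hR.le n)
  linarith

lemma isCompact_closure_Ddisc : IsCompact (closure Ddisc) :=
  isBounded_ball.isCompact_closure

lemma continuous_Amat (N : ℕ) (k : Fin N) : Continuous fun t : Fin (4*N) → ℂ => Amat N t k := by
  unfold Amat; fun_prop

lemma continuous_wFun : Continuous fun p : Matrix (Fin 2) (Fin 2) ℂ × ℂ => wFun p.1 p.2 := by
  unfold wFun; fun_prop

lemma continuousAt_phiFun {A : Matrix (Fin 2) (Fin 2) ℂ} {z : ℂ} (h : wFun A z ≠ 0) :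
    ContinuousAt (fun p : Matrix (Fin 2) (Fin 2) ℂ × ℂ => phiFun p.1 p.2) (A, z) := by
  unfold phiFun
  exact ContinuousAt.div (by fun_prop) continuous_wFun.continuousAt h

lemma continuousAt_psiC {s : ℂ} {A : Matrix (Fin 2) (Fin 2) ℂ} {z : ℂ} (hs : ‖s‖ ≠ 1)
    (hdet : A.det.re ≠ 0) (hw : 0 < (wFun A z).re) :
    ContinuousAt (fun p : ℂ × Matrix (Fin 2) (Fin 2) ℂ × ℂ => psiC p.1 p.2.1 p.2.2) (s, A, z) := by
  have hlogw : ContinuousAt (fun p : ℂ × Matrix (Fin 2) (Fin 2) ℂ × ℂ =>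
      Complex.log (wFun p.2.1 p.2.2)) (s, A, z) :=
    (continuous_wFun.comp continuous_snd).continuousAt.clog (Or.inl hw)
  have hdetc : Continuous fun p : ℂ × Matrix (Fin 2) (Fin 2) ℂ × ℂ => p.2.1.det :=
    (continuous_fst.comp continuous_snd).matrix_det
  have hnorm : ContinuousAt (fun p : ℂ × Matrix (Fin 2) (Fin 2) ℂ × ℂ => ‖p.1‖) (s, A, z) :=
    continuous_fst.norm.continuousAt
  have hre : ContinuousAt (fun p : ℂ × Matrix (Fin 2) (Fin 2) ℂ × ℂ => p.2.1.det.re) (s, A, z) :=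
    (Complex.continuous_re.comp hdetc).continuousAt
  rcases hs.lt_or_gt with hs | hs
  · refine (continuousAt_fst.mul hlogw).cexp.congr ?_
    filter_upwards [hnorm.eventually_lt continuousAt_const hs] with p hp
    simp [psiC, hp.le]
  have hs' : ∀ᶠ p in 𝓝 (s, A, z), ¬ ‖p.1‖ ≤ 1 :=
    (continuousAt_const.eventually_lt hnorm hs).mono fun _ h => not_le.2 h
  have hpow : ContinuousAt (fun p : ℂ × Matrix (Fin 2) (Fin 2) ℂ × ℂ =>
      Complex.exp ((2 - p.1) * Complex.log (wFun p.2.1 p.2.2))) (s, A, z) :=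
    ((continuousAt_const.sub continuousAt_fst).mul hlogw).cexp
  rcases hdet.lt_or_gt with hd | hd
  · have hdetpow : ContinuousAt (fun p : ℂ × Matrix (Fin 2) (Fin 2) ℂ × ℂ =>
        Complex.exp ((p.1 - 1) * Complex.log (-p.2.1.det))) (s, A, z) :=
      ((continuousAt_fst.sub continuousAt_const).mul
        (hdetc.neg.continuousAt.clog (Or.inl (by simpa using hd)))).cexp
    refine (hpow.mul hdetpow).congr ?_
    filter_upwards [hs', hre.eventually_lt continuousAt_const hd] with p hp hd
    simp [psiC, hp, hd.not_gt]
  · have hdetpow : ContinuousAt (fun p : ℂ × Matrix (Fin 2) (Fin 2) ℂ × ℂ =>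
        Complex.exp ((p.1 - 1) * Complex.log p.2.1.det)) (s, A, z) :=
      ((continuousAt_fst.sub continuousAt_const).mul
        (hdetc.continuousAt.clog (Or.inl (by simpa using hd)))).cexp
    refine (hpow.mul hdetpow).congr ?_
    filter_upwards [hs', continuousAt_const.eventually_lt hre hd] with p hp hd
    simp [psiC, hp, hd]

lemma tendstoUniformlyOn_of_continuousAt {X Y E : Type*} [TopologicalSpace X]
    [TopologicalSpace Y] [PseudoMetricSpace E] {F : X → Y → E} {x₀ : X} {K : Set Y}
    (hK : IsCompact K) (hF : ∀ y ∈ K, ContinuousAt (Function.uncurry F) (x₀, y)) :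
    TendstoUniformlyOn F (F x₀) (𝓝 x₀) K := by
  refine Metric.tendstoUniformlyOn_iff.2 fun ε hε => hK.eventually_forall_of_forall_eventually
    fun y hy => ?_
  have hnear : ∀ᶠ p : X × Y in 𝓝 (x₀, y), dist (F p.1 p.2) (F x₀ y) < ε / 2 :=
    Metric.tendsto_nhds.1 (hF y hy) (ε / 2) (half_pos hε)
  have hfiber : ∀ᶠ p : X × Y in 𝓝 (x₀, y), dist (F x₀ p.2) (F x₀ y) < ε / 2 :=
    Metric.tendsto_nhds.1 ((hF y hy).comp_of_eq
      (continuousAt_const.prodMk continuousAt_snd (x := (x₀, y))) rfl) (ε / 2) (half_pos hε)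
  filter_upwards [hnear, hfiber] with p h₁ h₂
  linarith [dist_triangle_right (F x₀ p.2) (F p.1 p.2) (F x₀ y), h₁, h₂]

lemma re_wFun_pos_of_closure_image {A : Matrix (Fin 2) (Fin 2) ℂ}
    (h : closure (wFun A '' Ddisc) ⊆ {z : ℂ | 0 < z.re}) :
    ∀ z ∈ closure Ddisc, 0 < (wFun A z).re := fun z hz =>
  h (image_closure_subset_closure_image (by unfold wFun; fun_prop) ⟨z, hz, rfl⟩)

lemma exists_radius_of_closure_image_subset {ι : Type*} [Finite ι] {f : ι → ℂ → ℂ}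
    (h : ∀ i, closure (f i '' Ddisc) ⊆ Ddisc) :
    ∃ R ∈ Ioo (0 : ℝ) 1, ∃ r < R / 2, ∀ i, ∀ z ∈ Ddisc, ‖f i z - 1/2‖ ≤ r := by
  obtain ⟨r, hr, hball⟩ := exists_lt_subset_ball
    (isClosed_iUnion_of_finite fun i => isClosed_closure) (iUnion_subset h)
  obtain ⟨R, hR₀, hR₁⟩ := exists_between (max_lt (by linarith : 2 * r < 1) one_pos)
  refine ⟨R, ⟨(le_max_right _ _).trans_lt hR₀, hR₁⟩, r,
    by linarith [(le_max_left (2 * r) 0).trans_lt hR₀], fun i z hz => ?_⟩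
  have := hball (mem_iUnion.2 ⟨i, subset_closure ⟨z, hz, rfl⟩⟩)
  rw [mem_ball, dist_eq_norm] at this
  exact this.le

section Amat

variable {N : ℕ} (i : Fin N) {s₀ : ℂ} {t₀ : Fin (4*N) → ℂ}

lemma tendstoUniformlyOn_psiC_Amat (hs : ‖s₀‖ ≠ 1) (hdet : (Amat N t₀ i).det.re ≠ 0)
    (hw : ∀ z ∈ closure Ddisc, 0 < (wFun (Amat N t₀ i) z).re) :
    TendstoUniformlyOn (fun p : ℂ × (Fin (4*N) → ℂ) => psiC p.1 (Amat N p.2 i))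
      (psiC s₀ (Amat N t₀ i)) (𝓝 (s₀, t₀)) Ddisc := by
  refine TendstoUniformlyOn.mono ?_ subset_closure
  refine tendstoUniformlyOn_of_continuousAt
    (F := fun p : ℂ × (Fin (4*N) → ℂ) => psiC p.1 (Amat N p.2 i)) (x₀ := (s₀, t₀))
    isCompact_closure_Ddisc fun z hz => ?_
  have hg : Continuous fun q : (ℂ × (Fin (4*N) → ℂ)) × ℂ => (q.1.1, Amat N q.1.2 i, q.2) := by
    have := continuous_Amat N i; fun_prop
  have key := (continuousAt_psiC hs hdet (hw z hz)).comp_of_eq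
    (hg.continuousAt (x := ((s₀, t₀), z))) rfl
  exact key

lemma tendstoUniformlyOn_phiFun_Amat
    (hw : ∀ z ∈ closure Ddisc, 0 < (wFun (Amat N t₀ i) z).re) :
    TendstoUniformlyOn (fun p : ℂ × (Fin (4*N) → ℂ) => phiFun (Amat N p.2 i))
      (phiFun (Amat N t₀ i)) (𝓝 (s₀, t₀)) Ddisc := by
  refine TendstoUniformlyOn.mono ?_ subset_closure
  refine tendstoUniformlyOn_of_continuousAt
    (F := fun p : ℂ × (Fin (4*N) → ℂ) => phiFun (Amat N p.2 i)) (x₀ := (s₀, t₀))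
    isCompact_closure_Ddisc fun z hz => ?_
  have hg : Continuous fun q : (ℂ × (Fin (4*N) → ℂ)) × ℂ => (Amat N q.1.2 i, q.2) := by
    have := continuous_Amat N i; fun_prop
  have hw0 : wFun (Amat N t₀ i) z ≠ 0 := fun h => by simpa [h] using hw z hz
  have key := (continuousAt_phiFun hw0).comp_of_eq (hg.continuousAt (x := ((s₀, t₀), z))) rfl
  exact key

end Amat

theorem operator_continuity_estimate_general (N : ℕ) (t₀ : Fin (4*N) → ℝ)
    (hΩ : (fun i => (t₀ i : ℂ)) ∈ OmegaSet N)
    (s₀ : ℝ) (hs₀ : s₀ ∈ Set.Ioo (0 : ℝ) 1 ∪ Set.Ioo (1 : ℝ) 2) :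
    ∃ R ∈ Set.Ioo (0 : ℝ) 1, ∀ ε : ℝ, 0 < ε → ∃ δ : ℝ, 0 < δ ∧
      ∀ s : ℂ, ‖s - (s₀ : ℂ)‖ < δ →
        ∀ t : Fin (4*N) → ℂ, ‖t - (fun i => (t₀ i : ℂ))‖ < δ →
          ∀ i : Fin N, ∀ n : ℕ,
            supD (fun z => psiC s (Amat N t i) z
                - psiC (s₀ : ℂ) (Amat N (fun j => (t₀ j : ℂ)) i) z)
                * supD (fun z => phiFun (Amat N t i) z - 1/2) ^ n
              + supD (psiC (s₀ : ℂ) (Amat N (fun j => (t₀ j : ℂ)) i))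
                * supD (fun z => (phiFun (Amat N t i) z - 1/2) ^ n
                    - (phiFun (Amat N (fun j => (t₀ j : ℂ)) i) z - 1/2) ^ n)
              ≤ ε * (R / 2) ^ n := by
  obtain ⟨hdet, hφD, hwD, -⟩ := hΩ
  have hw := fun i => re_wFun_pos_of_closure_image (hwD i)
  have hs₀' : ‖(s₀ : ℂ)‖ ≠ 1 := by
    rw [Complex.norm_real, Real.norm_of_nonneg (by rcases hs₀ with h | h <;> linarith [h.1])]
    rcases hs₀ with h | h
    exacts [h.2.ne, h.1.ne']
  obtain ⟨R, hR, r, hrR, hφ⟩ := exists_radius_of_closure_image_subset hφD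
  refine ⟨R, hR, fun ε hε => ?_⟩
  have hev := fun i => eventually_supD_weighted_le
    (tendstoUniformlyOn_psiC_Amat i hs₀' (hdet i) (hw i))
    (tendstoUniformlyOn_phiFun_Amat (s₀ := (s₀ : ℂ)) i (hw i)) (hφ i) hrR hε
  obtain ⟨δ, hδ, hball⟩ := Metric.eventually_nhds_iff.1 (eventually_all.2 hev)
  refine ⟨δ, hδ, fun s hs t ht => ?_⟩
  have key := hball (show dist (s, t) ((s₀ : ℂ), fun j => (t₀ j : ℂ)) < δ by
    rw [Prod.dist_eq, dist_eq_norm, dist_eq_norm]; exact max_lt hs ht)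
  dsimp only at key
  exact key

/-- Joint continuity estimate for the weighted composition operator data:
near $(s_0, t_0)$ with $t_0 \in (0,1)^{4N} \cap \Omega$, the combination of sup norms
appearing in the operator-norm estimate is bounded by $\varepsilon (R/2)^n$. -/
theorem operator_continuity_estimate (N : ℕ) (hN : 1 ≤ N) (t₀ : Fin (4*N) → ℝ)
    (ht₀ : ∀ i, t₀ i ∈ Set.Ioo (0 : ℝ) 1)
    (hΩ : (fun i => (t₀ i : ℂ)) ∈ OmegaSet N)
    (s₀ : ℝ) (hs₀ : s₀ ∈ Set.Ioo (0 : ℝ) 1 ∪ Set.Ioo (1 : ℝ) 2) :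
    ∃ R ∈ Set.Ioo (0 : ℝ) 1, ∀ ε : ℝ, 0 < ε → ∃ δ : ℝ, 0 < δ ∧
      ∀ s : ℂ, ‖s - (s₀ : ℂ)‖ < δ →
        ∀ t : Fin (4*N) → ℂ, ‖t - (fun i => (t₀ i : ℂ))‖ < δ →
          ∀ i : Fin N, ∀ n : ℕ,
            supD (fun z => psiC s (Amat N t i) z
                - psiC (s₀ : ℂ) (Amat N (fun j => (t₀ j : ℂ)) i) z)
                * supD (fun z => phiFun (Amat N t i) z - 1/2) ^ n
              + supD (psiC (s₀ : ℂ) (Amat N (fun j => (t₀ j : ℂ)) i))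
                * supD (fun z => (phiFun (Amat N t i) z - 1/2) ^ n
                    - (phiFun (Amat N (fun j => (t₀ j : ℂ)) i) z - 1/2) ^ n)
              ≤ ε * (R / 2) ^ n :=
  operator_continuity_estimate_general N t₀ hΩ s₀ hs₀
end

section
/- Let D be the open disc in ℂ of radius 1/2 centred at 1/2, let Γ ⊆ D ∩ ℝ be a compact infinite set, and let f : D → ℂ be holomorphic with f(z) ∈ ℝ for every z ∈ Γ. Then every Taylor coefficient of f at the centre 1/2 is real; equivalently, f(conj(z)) = conj(f(z)) for all z ∈ D. -/
/-!
Both `f` and its reflection `conj ∘ f ∘ conj` are holomorphic on the disc, which is symmetric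
about the real axis, and they agree on `Γ` because `Γ` is real and `f` is real on it. An infinite
compact set has an accumulation point in itself, hence in the disc, so the identity theorem makes
the two functions equal on the whole disc. Differentiating at the real centre `1/2` then shows
that every Taylor coefficient equals its own conjugate.
-/

open Set Metric Filter Topology ComplexConjugate

theorem iteratedDeriv_conj_conj {𝕜 : Type*} [RCLike 𝕜] (f : 𝕜 → 𝕜) (k : ℕ) :
    iteratedDeriv k (conj ∘ f ∘ conj) = conj ∘ iteratedDeriv k f ∘ conj := by
  induction k with
  | zero => simp
  | succ k ih => rw [iteratedDeriv_succ, iteratedDeriv_succ, ih, deriv_conj_conj]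

theorem DifferentiableOn.conj_conj {f : ℂ → ℂ} {U : Set ℂ} (hf : DifferentiableOn ℂ f U)
    (hU : IsOpen U) (hUconj : MapsTo conj U U) :
    DifferentiableOn ℂ (conj ∘ f ∘ conj) U := fun _ hz =>
  (differentiableAt_conj_conj_iff.mpr
    (hf.differentiableAt (hU.mem_nhds (hUconj hz)))).differentiableWithinAt

theorem mapsTo_conj_ball {c : ℂ} (hc : c.im = 0) (r : ℝ) : MapsTo conj (ball c r) (ball c r) := by
  intro z hz
  rwa [mem_ball, ← Complex.conj_eq_iff_im.mpr hc, Complex.dist_conj_conj]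

theorem eqOn_conj_conj_of_accPt {f : ℂ → ℂ} {U Γ : Set ℂ} {z₀ : ℂ}
    (hf : DifferentiableOn ℂ f U) (hU : IsOpen U) (hUconn : IsPreconnected U)
    (hUconj : MapsTo conj U U) (hz₀ : z₀ ∈ U) (hacc : AccPt z₀ (𝓟 Γ))
    (hΓreal : ∀ z ∈ Γ, z.im = 0) (hfreal : ∀ z ∈ Γ, (f z).im = 0) :
    EqOn (conj ∘ f ∘ conj) f U := by
  have hΓ : ∀ z ∈ Γ, (conj ∘ f ∘ conj) z = f z := fun z hz => by
    simp only [Function.comp_apply, Complex.conj_eq_iff_im.mpr (hΓreal z hz),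
      Complex.conj_eq_iff_im.mpr (hfreal z hz)]
  exact ((hf.conj_conj hU hUconj).analyticOnNhd hU).eqOn_of_preconnected_of_frequently_eq
    (hf.analyticOnNhd hU) hUconn hz₀ ((accPt_iff_frequently_nhdsNE.mp hacc).mono hΓ)

theorem iteratedDeriv_im_eq_zero_of_eventuallyEq_conj_conj {f : ℂ → ℂ} {c : ℂ} (hc : c.im = 0)
    (hfc : conj ∘ f ∘ conj =ᶠ[𝓝 c] f) (k : ℕ) : (iteratedDeriv k f c).im = 0 := by
  have h := hfc.iteratedDeriv_eq k
  rw [iteratedDeriv_conj_conj, Function.comp_apply, Function.comp_apply,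
    Complex.conj_eq_iff_im.mpr hc] at h
  exact Complex.conj_eq_iff_im.mp h

/-- If `f` is holomorphic on the disc `D` of radius 1/2 centred at 1/2 and
real-valued on a compact infinite subset `Γ ⊆ D ∩ ℝ`, then all Taylor coefficients of `f`
at `1/2` are real; equivalently `f(conj z) = conj (f z)` on `D`. -/
theorem real_on_compact_infinite_implies_real_coefficients
    (f : ℂ → ℂ) (hf : DifferentiableOn ℂ f (ball (1/2 : ℂ) (1/2)))
    (Γ : Set ℂ) (hΓD : Γ ⊆ ball (1/2 : ℂ) (1/2)) (hΓreal : ∀ z ∈ Γ, z.im = 0)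
    (hΓcompact : IsCompact Γ) (hΓinfinite : Γ.Infinite)
    (hfreal : ∀ z ∈ Γ, (f z).im = 0) :
    (∀ k : ℕ, (iteratedDeriv k f (1/2 : ℂ)).im = 0) ∧
    ∀ z ∈ ball (1/2 : ℂ) (1/2), f (starRingEnd ℂ z) = starRingEnd ℂ (f z) := by
  have hcenter : (1/2 : ℂ).im = 0 := by norm_num
  have hDconj := mapsTo_conj_ball hcenter (1/2)
  obtain ⟨z₀, hz₀Γ, hacc⟩ := hΓinfinite.exists_accPt_of_subset_isCompact hΓcompact subset_rfl
  have hEq : EqOn (conj ∘ f ∘ conj) f (ball (1/2 : ℂ) (1/2)) :=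
    eqOn_conj_conj_of_accPt hf isOpen_ball (convex_ball _ _).isPreconnected hDconj
      (hΓD hz₀Γ) hacc hΓreal hfreal
  refine ⟨iteratedDeriv_im_eq_zero_of_eventuallyEq_conj_conj hcenter
    (hEq.eventuallyEq_of_mem (isOpen_ball.mem_nhds (mem_ball_self one_half_pos))), ?_⟩
  intro z hz
  simpa using congrArg conj (hEq hz)
end
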